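/- arXiv:2011.09975 — 2 statements merged into one kernel-verified Lean document; each statement's English description precedes it below -/
import Mathlib

section
/- Let n ≥ 1, g ∈ ℂ[t_1,...,t_n] with g(0) = 0, a ∈ ℂ, and consider the sl(n+1)-module T(g, V_a, ∅) with underlying space e^g ℂ[t_1,...,t_n], where e_{i,n+1} acts (via the differential operator presentation with S = ∅ and 1-dimensional gl(n)-module V_a of weight a·tr) so that the coefficient of e^g t^m t_i^{-1} in e_{i,n+1}(e^g t^m) equals m_i (Σ_{j=1}^n m_j - 1 - (n+1)(a-1)). If (n+1)(a-1) ∉ ℤ, then T(g, V_a, ∅) is a simple sl(n+1)-module. -/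
open LieAlgebra.SpecialLinear Matrix MvPolynomial

attribute [local instance] LieRing.ofAssociativeRing

/-- The twisted derivative `∂̃_i = ∂_i + (∂_i g)·` acting on `ℂ[t]`
(the action of `∂_i` on `e^g ℂ[t]`, written on the coefficient `f` of `e^g f`). -/
noncomputable def Dtw {n : ℕ} (g : MvPolynomial (Fin n) ℂ) (i : Fin n)
    (f : MvPolynomial (Fin n) ℂ) : MvPolynomial (Fin n) ℂ :=
  pderiv i f + pderiv i g * f

/-!
An invariant subspace `W ⊆ ℂ[t]` is stable under multiplication by `t_j` (the action of
`e_{n+1,j}`), and then, by the actions of `h_k` and `e_{ij}`, under `f ↦ t_j ∂̃_i f`; summing over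
`i = j` shows that `W` is stable under the Euler operator `E = ∑ t_k ∂_k`, so `W` is spanned by
homogeneous elements. Modulo `W`, `e_{i,n+1}` acts on `f` as `(E - (n+1)(a-1)) ∂̃_i f`, and
`E - c` is invertible on each homogeneous component when `c ∉ ℕ`; hence `W` is stable under
`∂̃_i` and therefore under `∂_i`. A nonzero subspace of `ℂ[t]` stable under all `t_j` and `∂_i`
contains a nonzero constant (differentiate a nonzero homogeneous element down to degree `0`),
so it is everything.
-/

namespace Submodule

variable {K V ι : Type*} [Field K] [AddCommGroup V] [Module K V] {p : Submodule K V}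
  {E : Module.End K V} {s : Finset ι} {μ : ι → K} {v : ι → V}

theorem mem_of_sum_eigenvectors_mem (hE : ∀ x ∈ p, E x ∈ p) (hμ : Set.InjOn μ s)
    (hv : ∀ i ∈ s, E (v i) = μ i • v i) (hsum : ∑ i ∈ s, v i ∈ p) : ∀ i ∈ s, v i ∈ p := by
  classical
  induction s using Finset.induction_on generalizing v with
  | empty => simp
  | insert e t he ih =>
    have hv' : ∀ i ∈ t, E ((μ i - μ e) • v i) = μ i • (μ i - μ e) • v i := fun i hi => by
      rw [map_smul, hv i (Finset.mem_insert_of_mem hi), smul_comm]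
    have hshift : ∑ i ∈ t, (μ i - μ e) • v i ∈ p := by
      have hE_sum : E (∑ i ∈ insert e t, v i) - μ e • ∑ i ∈ insert e t, v i
          = ∑ i ∈ t, (μ i - μ e) • v i := by
        rw [map_sum, Finset.smul_sum, ← Finset.sum_sub_distrib, Finset.sum_insert he,
          hv e (Finset.mem_insert_self e t), sub_self, zero_add]
        exact Finset.sum_congr rfl fun i hi => by
          rw [hv i (Finset.mem_insert_of_mem hi), sub_smul]
      exact hE_sum ▸ p.sub_mem (hE _ hsum) (p.smul_mem _ hsum)
    have ht : ∀ i ∈ t, v i ∈ p := fun i hi => by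
      have hne : μ i - μ e ≠ 0 := sub_ne_zero.2 fun h =>
        he (hμ (Finset.mem_insert_of_mem hi) (Finset.mem_insert_self e t) h ▸ hi)
      exact (p.smul_mem_iff hne).1
        (ih (hμ.mono (Finset.subset_insert e t)) hv' hshift i hi)
    intro i hi
    rcases Finset.mem_insert.1 hi with rfl | hi
    · rw [Finset.sum_insert he] at hsum
      exact (p.add_mem_iff_left (p.sum_mem ht)).1 hsum
    · exact ht i hi

theorem sum_mem_of_sub_smul_mem (hE : ∀ x ∈ p, E x ∈ p) (hμ : Set.InjOn μ s)
    (hv : ∀ i ∈ s, E (v i) = μ i • v i) {c : K} (hc : ∀ i ∈ s, μ i ≠ c)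
    (h : E (∑ i ∈ s, v i) - c • ∑ i ∈ s, v i ∈ p) : ∑ i ∈ s, v i ∈ p := by
  have hE_sum : E (∑ i ∈ s, v i) - c • ∑ i ∈ s, v i = ∑ i ∈ s, (μ i - c) • v i := by
    rw [map_sum, Finset.smul_sum, ← Finset.sum_sub_distrib]
    exact Finset.sum_congr rfl fun i hi => by rw [hv i hi, sub_smul]
  have hv' : ∀ i ∈ s, E ((μ i - c) • v i) = μ i • (μ i - c) • v i := fun i hi => by
    rw [map_smul, hv i hi, smul_comm]
  refine p.sum_mem fun i hi => (p.smul_mem_iff (sub_ne_zero.2 (hc i hi))).1 ?_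
  exact mem_of_sum_eigenvectors_mem hE hμ hv' (hE_sum ▸ h) i hi

end Submodule

namespace MvPolynomial

section CommSemiring

variable {σ R : Type*} [CommSemiring R] {W : Submodule R (MvPolynomial σ R)}

theorem mul_mem_of_forall_X_mul_mem (hX : ∀ i, ∀ f ∈ W, X i * f ∈ W) (q : MvPolynomial σ R)
    {f : MvPolynomial σ R} (hf : f ∈ W) : q * f ∈ W := by
  induction q using MvPolynomial.induction_on generalizing f with
  | C c => rw [C_mul']; exact W.smul_mem c hf
  | add p q hp hq => rw [add_mul]; exact W.add_mem (hp hf) (hq hf)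
  | mul_X p i hp => rw [mul_assoc]; exact hp (hX i f hf)

theorem eq_top_of_forall_X_mul_mem (hX : ∀ i, ∀ f ∈ W, X i * f ∈ W) (h1 : 1 ∈ W) : W = ⊤ :=
  W.eq_top_iff'.2 fun q => mul_one q ▸ mul_mem_of_forall_X_mul_mem hX q h1

variable [Fintype σ]

noncomputable def eulerOperator : Module.End R (MvPolynomial σ R) :=
  ∑ i, LinearMap.mulLeft R (X i) ∘ₗ (pderiv i).toLinearMap

theorem eulerOperator_apply (f : MvPolynomial σ R) :
    eulerOperator f = ∑ i, X i * pderiv i f := by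
  simp [eulerOperator]

theorem eulerOperator_homogeneousComponent (d : ℕ) (f : MvPolynomial σ R) :
    eulerOperator (homogeneousComponent d f) = (d : R) • homogeneousComponent d f := by
  rw [eulerOperator_apply, (homogeneousComponent_isHomogeneous d f).sum_X_mul_pderiv,
    Nat.cast_smul_eq_nsmul]

end CommSemiring

variable {σ K : Type*} [Fintype σ] [Field K] [CharZero K] {W : Submodule K (MvPolynomial σ K)}

theorem homogeneousComponent_mem_of_eulerOperator_mem (hE : ∀ f ∈ W, eulerOperator f ∈ W)
    {f : MvPolynomial σ K} (hf : f ∈ W) (d : ℕ) : homogeneousComponent d f ∈ W := by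
  by_cases hd : d ≤ f.totalDegree
  · refine W.mem_of_sum_eigenvectors_mem hE Nat.cast_injective.injOn
      (fun d _ => eulerOperator_homogeneousComponent d f) ?_ d
      (Finset.mem_range.2 (Nat.lt_succ_of_le hd))
    rwa [sum_homogeneousComponent]
  · rw [homogeneousComponent_eq_zero _ _ (not_le.1 hd)]
    exact W.zero_mem

theorem mem_of_eulerOperator_sub_smul_mem (hE : ∀ f ∈ W, eulerOperator f ∈ W) {c : K}
    (hc : ∀ d : ℕ, (d : K) ≠ c) {f : MvPolynomial σ K} (h : eulerOperator f - c • f ∈ W) :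
    f ∈ W := by
  rw [← sum_homogeneousComponent f] at h ⊢
  exact W.sum_mem_of_sub_smul_mem hE Nat.cast_injective.injOn
    (fun d _ => eulerOperator_homogeneousComponent d f) (fun d _ => hc d) h

theorem one_mem_of_isHomogeneous_mem (hD : ∀ i, ∀ f ∈ W, pderiv i f ∈ W) (d : ℕ)
    {f : MvPolynomial σ K} (hf : f ∈ W) (hf0 : f ≠ 0) (hhom : f.IsHomogeneous d) : 1 ∈ W := by
  induction d generalizing f with
  | zero =>
    obtain ⟨c, rfl⟩ : ∃ c, f = C c :=
      ⟨_, totalDegree_eq_zero_iff_eq_C.1 ((totalDegree_zero_iff_isHomogeneous σ).2 hhom)⟩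
    have hc : c ≠ 0 := fun h => hf0 (by rw [h, C_0])
    simpa [smul_eq_C_mul, ← C_mul, inv_mul_cancel₀ hc] using W.smul_mem c⁻¹ hf
  | succ d ih =>
    have heuler : ∑ i, X i * pderiv i f ≠ 0 := by
      rw [hhom.sum_X_mul_pderiv]
      exact smul_ne_zero (Nat.succ_ne_zero d) hf0
    obtain ⟨i, -, hi⟩ := Finset.exists_ne_zero_of_sum_ne_zero heuler
    exact ih (hD i f hf) (right_ne_zero_of_mul hi) hhom.pderiv

/-- `K[t]` is a simple module over the Weyl algebra. -/
theorem eq_bot_or_eq_top_of_X_mul_mem_of_pderiv_mem (hX : ∀ i, ∀ f ∈ W, X i * f ∈ W)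
    (hD : ∀ i, ∀ f ∈ W, pderiv i f ∈ W) : W = ⊥ ∨ W = ⊤ := by
  refine or_iff_not_imp_left.2 fun hW => eq_top_of_forall_X_mul_mem hX ?_
  obtain ⟨f, hf, hf0⟩ := W.ne_bot_iff.1 hW
  have hE : ∀ f ∈ W, eulerOperator f ∈ W := fun f hf => by
    rw [eulerOperator_apply]
    exact W.sum_mem fun i _ => hX i _ (hD i f hf)
  have hsum : ∑ d ∈ Finset.range (f.totalDegree + 1), homogeneousComponent d f ≠ 0 := by
    rwa [sum_homogeneousComponent]
  obtain ⟨d, -, hd⟩ := Finset.exists_ne_zero_of_sum_ne_zero hsum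
  exact one_mem_of_isHomogeneous_mem hD d (homogeneousComponent_mem_of_eulerOperator_mem hE hf d)
    hd (homogeneousComponent_isHomogeneous d f)

end MvPolynomial

theorem single_sub_smul_one_mem_sl {K : Type*} [Field K] [CharZero K] {n : ℕ}
    (k : Fin (n + 1)) :
    Matrix.single k k (1 : K) - ((n : K) + 1)⁻¹ • 1 ∈ sl (Fin (n + 1)) K := by
  change _ ∈ LinearMap.ker (Matrix.traceLinearMap (Fin (n + 1)) K K)
  rw [LinearMap.mem_ker, Matrix.traceLinearMap_apply, Matrix.trace_sub, Matrix.trace_smul,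
    Matrix.trace_single_eq_same, Matrix.trace_one, Fintype.card_fin, smul_eq_mul, Nat.cast_succ,
    inv_mul_cancel₀ (Nat.cast_add_one_ne_zero n), sub_self]

theorem eulerOperator_eq_sum_X_mul_Dtw {n : ℕ} (g f : MvPolynomial (Fin n) ℂ) :
    eulerOperator f = ∑ k, (X k * Dtw g k f - pderiv k g * (X k * f)) := by
  rw [eulerOperator_apply]
  exact Finset.sum_congr rfl fun k _ => by rw [Dtw]; ring

section InvariantSubspace

variable {n : ℕ} {g : MvPolynomial (Fin n) ℂ} {a : ℂ}
  {π : sl (Fin (n + 1)) ℂ →ₗ⁅ℂ⁆ Module.End ℂ (MvPolynomial (Fin n) ℂ)}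
  {W : Submodule ℂ (MvPolynomial (Fin n) ℂ)}

theorem X_mul_mem_of_invariant
    (hπlow : ∀ (j : Fin n) (Y : sl (Fin (n + 1)) ℂ),
      (Y : Matrix (Fin (n + 1)) (Fin (n + 1)) ℂ) =
          Matrix.single (Fin.last n) j.castSucc 1 →
        ∀ f, π Y f = -(X j * f))
    (hW : ∀ (Y : sl (Fin (n + 1)) ℂ), ∀ w ∈ W, π Y w ∈ W) (j : Fin n) {f} (hf : f ∈ W) :
    X j * f ∈ W := by
  let Y := single (Fin.last n) j.castSucc (Fin.castSucc_lt_last j).ne' (1 : ℂ)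
  simpa [hπlow j Y rfl f] using W.neg_mem (hW Y f hf)

theorem X_mul_Dtw_mem_of_invariant
    (hπh : ∀ (k : Fin n) (Y : sl (Fin (n + 1)) ℂ),
      (Y : Matrix (Fin (n + 1)) (Fin (n + 1)) ℂ) =
          Matrix.single k.castSucc k.castSucc 1 - ((n : ℂ) + 1)⁻¹ • 1 →
        ∀ f, π Y f = -(X k * pderiv k g * f) - X k * pderiv k f + (1 - a) • f)
    (hπe : ∀ (i j : Fin n), i ≠ j → ∀ Y : sl (Fin (n + 1)) ℂ,
      (Y : Matrix (Fin (n + 1)) (Fin (n + 1)) ℂ) =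
          Matrix.single i.castSucc j.castSucc 1 →
        ∀ f, π Y f = -(X j * Dtw g i f))
    (hW : ∀ (Y : sl (Fin (n + 1)) ℂ), ∀ w ∈ W, π Y w ∈ W) (i j : Fin n) {f} (hf : f ∈ W) :
    X j * Dtw g i f ∈ W := by
  obtain rfl | hij := eq_or_ne i j
  · let Y : sl (Fin (n + 1)) ℂ := ⟨_, single_sub_smul_one_mem_sl i.castSucc⟩
    have hY : X i * Dtw g i f = (1 - a) • f - π Y f := by
      rw [hπh i Y rfl f, Dtw, smul_eq_C_mul]
      ring
    exact hY ▸ W.sub_mem (W.smul_mem _ hf) (hW Y f hf)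
  · let Y := single i.castSucc j.castSucc (Fin.castSucc_injective n |>.ne hij) (1 : ℂ)
    simpa [hπe i j hij Y rfl f] using W.neg_mem (hW Y f hf)

theorem Dtw_mem_of_invariant (ha : ∀ m : ℤ, ((n : ℂ) + 1) * (a - 1) ≠ m)
    (hπup : ∀ (i : Fin n) (Y : sl (Fin (n + 1)) ℂ),
      (Y : Matrix (Fin (n + 1)) (Fin (n + 1)) ℂ) =
          Matrix.single i.castSucc (Fin.last n) 1 →
        ∀ f, π Y f = -(a • Dtw g i f) + (∑ j : Fin n, X j * Dtw g j (Dtw g i f))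
          - (n : ℂ) • (a • Dtw g i f) + ((n : ℂ) + 1) • Dtw g i f)
    (hW : ∀ (Y : sl (Fin (n + 1)) ℂ), ∀ w ∈ W, π Y w ∈ W)
    (hX : ∀ j, ∀ f ∈ W, X j * f ∈ W) (hXD : ∀ i j, ∀ f ∈ W, X j * Dtw g i f ∈ W)
    (i : Fin n) {f} (hf : f ∈ W) : Dtw g i f ∈ W := by
  have hE : ∀ f ∈ W, eulerOperator f ∈ W := fun f hf => by
    rw [eulerOperator_eq_sum_X_mul_Dtw g]
    exact W.sum_mem fun k _ =>
      W.sub_mem (hXD k k f hf) (mul_mem_of_forall_X_mul_mem hX _ (hX k f hf))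
  set u := Dtw g i f
  set c := ((n : ℂ) + 1) * (a - 1)
  let Y := single i.castSucc (Fin.last n) (Fin.castSucc_lt_last i).ne (1 : ℂ)
  have hY : eulerOperator u - c • u = π Y f - ∑ j, pderiv j g * (X j * u) := by
    rw [hπup i Y rfl f, eulerOperator_eq_sum_X_mul_Dtw g, ← sub_eq_zero]
    simp only [Finset.sum_sub_distrib, smul_eq_C_mul, c, map_mul, map_add, map_sub, map_one,
      map_natCast]
    ring
  refine mem_of_eulerOperator_sub_smul_mem hE (fun d h => ha d (by rw [Int.cast_natCast, h])) ?_
  exact hY ▸ W.sub_mem (hW Y f hf) (W.sum_mem fun j _ =>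
    mul_mem_of_forall_X_mul_mem hX _ (hXD i j f hf))

end InvariantSubspace

theorem exponential_tensor_module_simple_of_nonintegral_general (n : ℕ)
    (g : MvPolynomial (Fin n) ℂ) (a : ℂ)
    (ha : ∀ m : ℤ, ((n : ℂ) + 1) * (a - 1) ≠ m)
    (π : sl (Fin (n + 1)) ℂ →ₗ⁅ℂ⁆ Module.End ℂ (MvPolynomial (Fin n) ℂ))
    -- h_k acts by h_k·(e^g f) = -t_k ∂_k(g) e^g f - e^g t_k ∂_k f + (1-a) e^g f
    (hπh : ∀ (k : Fin n) (Y : sl (Fin (n + 1)) ℂ),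
      (Y : Matrix (Fin (n + 1)) (Fin (n + 1)) ℂ) =
          Matrix.single k.castSucc k.castSucc 1 - ((n : ℂ) + 1)⁻¹ • 1 →
        ∀ f, π Y f = -(X k * pderiv k g * f) - X k * pderiv k f + (1 - a) • f)
    -- e_{i,j}·(e^g f) = -e^g (t_j ∂_i + t_j ∂_i(g)) f for i ≠ j ≤ n
    (hπe : ∀ (i j : Fin n), i ≠ j → ∀ Y : sl (Fin (n + 1)) ℂ,
      (Y : Matrix (Fin (n + 1)) (Fin (n + 1)) ℂ) =
          Matrix.single i.castSucc j.castSucc 1 →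
        ∀ f, π Y f = -(X j * Dtw g i f))
    -- e_{n+1,j}·(e^g f) = -t_j e^g f
    (hπlow : ∀ (j : Fin n) (Y : sl (Fin (n + 1)) ℂ),
      (Y : Matrix (Fin (n + 1)) (Fin (n + 1)) ℂ) =
          Matrix.single (Fin.last n) j.castSucc 1 →
        ∀ f, π Y f = -(X j * f))
    -- e_{i,n+1} acts as in ω_{V_a,∅} (twisted by θ_g)
    (hπup : ∀ (i : Fin n) (Y : sl (Fin (n + 1)) ℂ),
      (Y : Matrix (Fin (n + 1)) (Fin (n + 1)) ℂ) =
          Matrix.single i.castSucc (Fin.last n) 1 →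
        ∀ f, π Y f = -(a • Dtw g i f) + (∑ j : Fin n, X j * Dtw g j (Dtw g i f))
          - (n : ℂ) • (a • Dtw g i f) + ((n : ℂ) + 1) • Dtw g i f) :
    ∀ W : Submodule ℂ (MvPolynomial (Fin n) ℂ),
      (∀ (Y : sl (Fin (n + 1)) ℂ), ∀ w ∈ W, π Y w ∈ W) → W = ⊥ ∨ W = ⊤ := by
  intro W hW
  have hX : ∀ j, ∀ f ∈ W, X j * f ∈ W := fun j _ => X_mul_mem_of_invariant hπlow hW j
  have hXD : ∀ i j, ∀ f ∈ W, X j * Dtw g i f ∈ W := fun i j _ =>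
    X_mul_Dtw_mem_of_invariant hπh hπe hW i j
  have hD : ∀ i, ∀ f ∈ W, pderiv i f ∈ W := fun i f hf => by
    have hpderiv : pderiv i f = Dtw g i f - pderiv i g * f := by rw [Dtw]; ring
    exact hpderiv ▸ W.sub_mem (Dtw_mem_of_invariant ha hπup hW hX hXD i hf)
      (mul_mem_of_forall_X_mul_mem hX _ hf)
  exact eq_bot_or_eq_top_of_X_mul_mem_of_pderiv_mem hX hD

/-- if `(n+1)(a-1) ∉ ℤ`, then the exponential tensor module
`T(g, V_a, ∅) = e^g ℂ[t]` (with the `sl(n+1)`-action of the Rudakov–Shen presentation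
`ω_{V_a,∅}` twisted by `θ_g`, `V_a` being the one-dimensional `gl(n)`-module of weight
`a·tr`) is a simple `sl(n+1)`-module. -/
theorem exponential_tensor_module_simple_of_nonintegral (n : ℕ) (hn : 1 ≤ n)
    (g : MvPolynomial (Fin n) ℂ) (hg : constantCoeff g = 0) (a : ℂ)
    (ha : ∀ m : ℤ, ((n : ℂ) + 1) * (a - 1) ≠ m)
    (π : sl (Fin (n + 1)) ℂ →ₗ⁅ℂ⁆ Module.End ℂ (MvPolynomial (Fin n) ℂ))
    -- h_k acts by h_k·(e^g f) = -t_k ∂_k(g) e^g f - e^g t_k ∂_k f + (1-a) e^g f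
    (hπh : ∀ (k : Fin n) (Y : sl (Fin (n + 1)) ℂ),
      (Y : Matrix (Fin (n + 1)) (Fin (n + 1)) ℂ) =
          Matrix.single k.castSucc k.castSucc 1 - ((n : ℂ) + 1)⁻¹ • 1 →
        ∀ f, π Y f = -(X k * pderiv k g * f) - X k * pderiv k f + (1 - a) • f)
    -- e_{i,j}·(e^g f) = -e^g (t_j ∂_i + t_j ∂_i(g)) f for i ≠ j ≤ n
    (hπe : ∀ (i j : Fin n), i ≠ j → ∀ Y : sl (Fin (n + 1)) ℂ,
      (Y : Matrix (Fin (n + 1)) (Fin (n + 1)) ℂ) =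
          Matrix.single i.castSucc j.castSucc 1 →
        ∀ f, π Y f = -(X j * Dtw g i f))
    -- e_{n+1,j}·(e^g f) = -t_j e^g f
    (hπlow : ∀ (j : Fin n) (Y : sl (Fin (n + 1)) ℂ),
      (Y : Matrix (Fin (n + 1)) (Fin (n + 1)) ℂ) =
          Matrix.single (Fin.last n) j.castSucc 1 →
        ∀ f, π Y f = -(X j * f))
    -- e_{i,n+1} acts as in ω_{V_a,∅} (twisted by θ_g)
    (hπup : ∀ (i : Fin n) (Y : sl (Fin (n + 1)) ℂ),
      (Y : Matrix (Fin (n + 1)) (Fin (n + 1)) ℂ) =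
          Matrix.single i.castSucc (Fin.last n) 1 →
        ∀ f, π Y f = -(a • Dtw g i f) + (∑ j : Fin n, X j * Dtw g j (Dtw g i f))
          - (n : ℂ) • (a • Dtw g i f) + ((n : ℂ) + 1) • Dtw g i f) :
    ∀ W : Submodule ℂ (MvPolynomial (Fin n) ℂ),
      (∀ (Y : sl (Fin (n + 1)) ℂ), ∀ w ∈ W, π Y w ∈ W) → W = ⊥ ∨ W = ⊤ :=
  exponential_tensor_module_simple_of_nonintegral_general n g a ha π hπh hπe hπlow hπup
end

section
/- Let n ≥ 1, a ∈ ℂ with (n+1)(a-1) ∈ ℤ, g ∈ ℂ[t_1,...,t_n] with g(0)=0, and S ⊆ {1,...,n}. In the sl(n+1)-module T(g,V_a,S) with basis e^g t^m (m_i ∈ ℤ_{<0} for i ∈ S, m_i ∈ ℤ_{≥0} for i ∉ S), the subspace T' = span{ e^g t^m : Σ_{j=1}^n m_j ≥ (n+1)(a-1) + 1 } is an sl(n+1)-submodule. -/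
open LieAlgebra.SpecialLinear Matrix MvPolynomial
open scoped Classical

attribute [local instance 100] LieRing.ofAssociativeRing

/-- Exponents allowed for the module `e^g (ℂ[t])^{ψ_S} ≅ e^g D⁺_{(S)}(ℂ[t])`:
negative in the positions of `S`, nonnegative elsewhere. -/
def AllowedExp {n : ℕ} (S : Finset (Fin n)) (m : Fin n → ℤ) : Prop :=
  ∀ i, if i ∈ S then m i < 0 else 0 ≤ m i

/-- Underlying space of `T(g,V_a,S)`: formal span of the monomials `e^g t^m` with
`m` an allowed exponent. -/
def TgS (n : ℕ) (S : Finset (Fin n)) : Type :=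
  {m : Fin n → ℤ // AllowedExp S m} →₀ ℂ

noncomputable instance (n : ℕ) (S : Finset (Fin n)) : AddCommGroup (TgS n S) :=
  inferInstanceAs (AddCommGroup ({m : Fin n → ℤ // AllowedExp S m} →₀ ℂ))

noncomputable instance (n : ℕ) (S : Finset (Fin n)) : Module ℂ (TgS n S) :=
  inferInstanceAs (Module ℂ ({m : Fin n → ℤ // AllowedExp S m} →₀ ℂ))

/-- The basis monomial `e^g t^m` if `m` is allowed, `0` otherwise. -/
noncomputable def bmono {n : ℕ} (S : Finset (Fin n)) (m : Fin n → ℤ) : TgS n S :=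
  if h : AllowedExp S m then Finsupp.single ⟨m, h⟩ 1 else 0

/-- The action of `t_i` on `T(g,V_a,S)` (on exponents, with projection). -/
noncomputable def tOp {n : ℕ} (S : Finset (Fin n)) (i : Fin n) :
    Module.End ℂ (TgS n S) :=
  Finsupp.lift (TgS n S) ℂ {m : Fin n → ℤ // AllowedExp S m} fun m =>
    bmono S (Function.update m.1 i (m.1 i + 1))

/-- The action of `∂_i` (the nonexponential part) on `T(g,V_a,S)`. -/
noncomputable def dOp {n : ℕ} (S : Finset (Fin n)) (i : Fin n) :
    Module.End ℂ (TgS n S) :=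
  Finsupp.lift (TgS n S) ℂ {m : Fin n → ℤ // AllowedExp S m} fun m =>
    (m.1 i : ℂ) • bmono S (Function.update m.1 i (m.1 i - 1))

/-- Multiplication by a polynomial `p ∈ ℂ[t]` on `T(g,V_a,S)` (with projection). -/
noncomputable def pMul {n : ℕ} (S : Finset (Fin n)) (p : MvPolynomial (Fin n) ℂ) :
    Module.End ℂ (TgS n S) :=
  Finsupp.lift (TgS n S) ℂ {m : Fin n → ℤ // AllowedExp S m} fun m =>
    (AddMonoidAlgebra.coeff p).sum fun k c => c • bmono S (fun i => m.1 i + k i)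

/-- The action of `∂_i` on `e^g t^m`, i.e. `∂_i + (∂_i g)·`. -/
noncomputable def dgOp {n : ℕ} (S : Finset (Fin n)) (g : MvPolynomial (Fin n) ℂ)
    (i : Fin n) : Module.End ℂ (TgS n S) :=
  dOp S i + pMul S (pderiv i g)

/-!
Endomorphisms preserving a subspace form a Lie subalgebra, and the root vectors `E_pq`
(`p ≠ q`) generate `sl(n+1)` as a Lie algebra (`[E_pq, E_qp] = E_pp - E_qq`), so it suffices
that each `E_pq` preserves `T'`. On total degrees, `t_j` adds one, `∂_i + ∂_i g` subtracts at
most one, and multiplication by a polynomial does not lower it; this settles `E_{n+1,j}` and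
`E_{ij}`. The action of `E_{i,n+1}` factors as `(Σ_j t_j (∂_j + ∂_j g) - N) ∘ (∂_i + ∂_i g)`,
and up to degree-raising terms the first factor is the Euler operator minus `N`: it kills
monomials of degree exactly `N`, so it maps degree `≥ N` into degree `≥ N + 1`.
-/

namespace Submodule

variable {R M : Type*} [CommRing R] [AddCommGroup M] [Module R M]

def stabilizerLieSubalgebra (p : Submodule R M) : LieSubalgebra R (Module.End R M) where
  carrier := {f | ∀ v ∈ p, f v ∈ p}
  add_mem' hf hg v hv := add_mem (hf v hv) (hg v hv)
  zero_mem' _ _ := zero_mem p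
  smul_mem' c _ hf v hv := p.smul_mem c (hf v hv)
  lie_mem' {f g} hf hg v hv := by
    rw [LieRing.of_associative_ring_bracket]
    exact sub_mem (hf _ (hg v hv)) (hg _ (hf v hv))

theorem mem_stabilizerLieSubalgebra {p : Submodule R M} {f : Module.End R M} :
    f ∈ p.stabilizerLieSubalgebra ↔ ∀ v ∈ p, f v ∈ p :=
  Iff.rfl

end Submodule

namespace LieAlgebra.SpecialLinear

variable {ι R : Type*} [DecidableEq ι] [Fintype ι] [CommRing R]

theorem lie_single_single {i j : ι} (h : i ≠ j) (r s : R) :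
    ⁅single i j h r, single j i h.symm s⁆ = singleSubSingle i j (r * s) := by
  ext : 1
  rw [LieSubalgebra.coe_bracket, LieRing.of_associative_ring_bracket]
  simp [Matrix.single_mul_single_same, mul_comm s r]

theorem eq_sum_single_add_singleSubSingle (Y : sl ι R) (l : ι) :
    Y = ∑ p, ∑ q, if h : p = q then (Y : Matrix ι ι R) p p • singleSubSingle p l 1
      else (Y : Matrix ι ι R) p q • single p q h 1 := by
  have htr : ∑ p, (Y : Matrix ι ι R) p p = 0 := Y.2
  ext : 1
  have hterm : ∀ p q, ((if h : p = q then (Y : Matrix ι ι R) p p • singleSubSingle p l 1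
      else (Y : Matrix ι ι R) p q • single p q h 1 : sl ι R) : Matrix ι ι R) =
      Matrix.single p q ((Y : Matrix ι ι R) p q) -
        if p = q then Matrix.single l l ((Y : Matrix ι ι R) p p) else 0 := by
    intro p q
    split_ifs with h
    · subst h; simp [smul_sub, Matrix.smul_single]
    · simp [Matrix.smul_single]
  have hdiag : ∑ p, Matrix.single l l ((Y : Matrix ι ι R) p p) = 0 := by
    simpa [htr] using (map_sum (Matrix.singleAddMonoidHom l l)
      (fun p => (Y : Matrix ι ι R) p p) Finset.univ).symm
  simp only [AddSubmonoidClass.coe_finsetSum, hterm, Finset.sum_sub_distrib,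
    Finset.sum_ite_eq, Finset.mem_univ, if_true, hdiag, sub_zero]
  exact Matrix.matrix_eq_sum_single _

theorem lieSubalgebra_eq_top_of_single_mem {K : LieSubalgebra R (sl ι R)}
    (hK : ∀ i j (h : i ≠ j), single i j h 1 ∈ K) : K = ⊤ := by
  have hdiag : ∀ i j, singleSubSingle i j (1 : R) ∈ K := by
    intro i j
    by_cases h : i = j
    · subst h
      convert K.zero_mem
      ext : 1
      simp
    · simpa [lie_single_single] using K.lie_mem (hK i j h) (hK j i (Ne.symm h))
  rw [eq_top_iff]
  intro Y _
  rcases isEmpty_or_nonempty ι with hι | ⟨⟨l⟩⟩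
  · simp [Subsingleton.elim Y 0]
  rw [eq_sum_single_add_singleSubSingle Y l]
  refine K.sum_mem fun p _ => K.sum_mem fun q _ => ?_
  split_ifs with h
  · exact K.smul_mem _ (hdiag p l)
  · exact K.smul_mem _ (hK p q h)

end LieAlgebra.SpecialLinear

theorem Finsupp.lift_single_one {R X M : Type*} [Semiring R] [AddCommMonoid M] [Module R M]
    (f : X → M) (x : X) : Finsupp.lift M R X f (Finsupp.single x 1) = f x := by
  simp

theorem Fintype.sum_update_self_add {ι β : Type*} [Fintype ι] [DecidableEq ι] [AddCommGroup β]
    (m : ι → β) (i : ι) (k : β) : ∑ j, Function.update m i (m i + k) j = ∑ j, m j + k := by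
  rw [Finset.sum_update_of_mem (Finset.mem_univ i),
    ← Finset.add_sum_erase _ _ (Finset.mem_univ i), Finset.sdiff_singleton_eq_erase]
  abel

section DegreeFiltration

variable {n : ℕ} {S : Finset (Fin n)}

noncomputable def degreeFiltration (S : Finset (Fin n)) (d : ℤ) : Submodule ℂ (TgS n S) :=
  Submodule.span ℂ {v : TgS n S | ∃ (m : Fin n → ℤ) (h : AllowedExp S m),
    d ≤ ∑ i, m i ∧ v = Finsupp.single ⟨m, h⟩ 1}

theorem degreeFiltration_antitone : Antitone (degreeFiltration S) :=
  fun _ _ hde => Submodule.span_mono fun _ ⟨m, hm, hd, hv⟩ => ⟨m, hm, hde.trans hd, hv⟩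

theorem bmono_of_allowedExp {m : Fin n → ℤ} (h : AllowedExp S m) :
    bmono S m = (Finsupp.single ⟨m, h⟩ 1 : TgS n S) :=
  dif_pos h

theorem bmono_mem_degreeFiltration {d : ℤ} {m : Fin n → ℤ} (hd : d ≤ ∑ i, m i) :
    bmono S m ∈ degreeFiltration S d := by
  by_cases h : AllowedExp S m
  · rw [bmono_of_allowedExp h]
    exact Submodule.subset_span ⟨m, h, hd, rfl⟩
  · rw [show bmono S m = 0 from dif_neg h]
    exact zero_mem _

theorem map_mem_degreeFiltration {f : Module.End ℂ (TgS n S)} {d e : ℤ}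
    (hf : ∀ m : Fin n → ℤ, AllowedExp S m → d ≤ ∑ i, m i → f (bmono S m) ∈ degreeFiltration S e)
    {v : TgS n S} (hv : v ∈ degreeFiltration S d) : f v ∈ degreeFiltration S e :=
  (Submodule.span_le (p := (degreeFiltration S e).comap f)).2
    (by rintro _ ⟨m, h, hm, rfl⟩; rw [← bmono_of_allowedExp h]; exact hf m h hm) hv

theorem AllowedExp.update_sub_one {m : Fin n → ℤ} (h : AllowedExp S m) {j : Fin n}
    (hj : m j ≠ 0) : AllowedExp S (Function.update m j (m j - 1)) := by
  intro l
  rcases eq_or_ne l j with rfl | hl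
  · have := h l
    simp only [Function.update_self]
    split_ifs at this ⊢ <;> omega
  · simpa [Function.update_of_ne hl] using h l

theorem tOp_bmono {m : Fin n → ℤ} (h : AllowedExp S m) (i : Fin n) :
    tOp S i (bmono S m) = bmono S (Function.update m i (m i + 1)) := by
  rw [bmono_of_allowedExp h]
  exact Finsupp.lift_single_one _ _

theorem dOp_bmono {m : Fin n → ℤ} (h : AllowedExp S m) (i : Fin n) :
    dOp S i (bmono S m) = (m i : ℂ) • bmono S (Function.update m i (m i - 1)) := by
  rw [bmono_of_allowedExp h]
  exact Finsupp.lift_single_one _ _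

theorem pMul_bmono {m : Fin n → ℤ} (h : AllowedExp S m) (p : MvPolynomial (Fin n) ℂ) :
    pMul S p (bmono S m) =
      (AddMonoidAlgebra.coeff p).sum fun k c => c • bmono S (fun i => m i + k i) := by
  rw [bmono_of_allowedExp h]
  exact Finsupp.lift_single_one _ _

theorem tOp_mem_degreeFiltration (i : Fin n) {d : ℤ} {v : TgS n S}
    (hv : v ∈ degreeFiltration S d) : tOp S i v ∈ degreeFiltration S (d + 1) :=
  map_mem_degreeFiltration (fun m h hm => by
    rw [tOp_bmono h]
    exact bmono_mem_degreeFiltration (by rw [Fintype.sum_update_self_add]; omega)) hv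

theorem dOp_mem_degreeFiltration (i : Fin n) {d : ℤ} {v : TgS n S}
    (hv : v ∈ degreeFiltration S (d + 1)) : dOp S i v ∈ degreeFiltration S d :=
  map_mem_degreeFiltration (fun m h hm => by
    rw [dOp_bmono h, sub_eq_add_neg (m i)]
    exact Submodule.smul_mem _ _
      (bmono_mem_degreeFiltration (by rw [Fintype.sum_update_self_add]; omega))) hv

theorem pMul_mem_degreeFiltration (p : MvPolynomial (Fin n) ℂ) {d : ℤ} {v : TgS n S}
    (hv : v ∈ degreeFiltration S d) : pMul S p v ∈ degreeFiltration S d :=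
  map_mem_degreeFiltration (fun m h hm => by
    rw [pMul_bmono h]
    refine Submodule.finsuppSum_mem _ _ _ _ fun k _ => Submodule.smul_mem _ _
      (bmono_mem_degreeFiltration ?_)
    have : 0 ≤ ∑ i, (k i : ℤ) := Finset.sum_nonneg fun i _ => Int.natCast_nonneg _
    rw [Finset.sum_add_distrib]
    omega) hv

theorem dgOp_mem_degreeFiltration (g : MvPolynomial (Fin n) ℂ) (i : Fin n) {d : ℤ}
    {v : TgS n S} (hv : v ∈ degreeFiltration S (d + 1)) : dgOp S g i v ∈ degreeFiltration S d :=
  add_mem (dOp_mem_degreeFiltration i hv)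
    (degreeFiltration_antitone (by omega) (pMul_mem_degreeFiltration _ hv))

theorem tOp_dOp_bmono {m : Fin n → ℤ} (h : AllowedExp S m) (j : Fin n) :
    tOp S j (dOp S j (bmono S m)) = (m j : ℂ) • bmono S m := by
  rw [dOp_bmono h, map_smul]
  by_cases hj : m j = 0
  · rw [hj, Int.cast_zero, zero_smul, zero_smul]
  · rw [tOp_bmono (h.update_sub_one hj), Function.update_self, Function.update_idem,
      sub_add_cancel, Function.update_eq_self]

noncomputable def eulerOp (S : Finset (Fin n)) : Module.End ℂ (TgS n S) :=
  ∑ j, tOp S j ∘ₗ dOp S j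

theorem eulerOp_bmono {m : Fin n → ℤ} (h : AllowedExp S m) :
    eulerOp S (bmono S m) = ((∑ j, m j : ℤ) : ℂ) • bmono S m := by
  simp only [eulerOp, LinearMap.sum_apply, LinearMap.comp_apply, tOp_dOp_bmono h, Int.cast_sum,
    Finset.sum_smul]

theorem eulerOp_sub_mem_degreeFiltration {d : ℤ} {v : TgS n S}
    (hv : v ∈ degreeFiltration S d) : eulerOp S v - (d : ℂ) • v ∈ degreeFiltration S (d + 1) := by
  have key : ∀ m : Fin n → ℤ, AllowedExp S m → d ≤ ∑ i, m i →
      (eulerOp S - (d : ℂ) • LinearMap.id : Module.End ℂ (TgS n S)) (bmono S m) ∈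
        degreeFiltration S (d + 1) := by
    intro m h hm
    rw [LinearMap.sub_apply, LinearMap.smul_apply, LinearMap.id_apply, eulerOp_bmono h,
      ← sub_smul, ← Int.cast_sub]
    rcases hm.eq_or_lt with hdeg | hdeg
    · rw [← hdeg, sub_self, Int.cast_zero, zero_smul]
      exact zero_mem _
    · exact Submodule.smul_mem _ _ (bmono_mem_degreeFiltration hdeg)
  exact map_mem_degreeFiltration key hv

theorem sum_tOp_dgOp_sub_mem_degreeFiltration (g : MvPolynomial (Fin n) ℂ) {d : ℤ}
    {v : TgS n S} (hv : v ∈ degreeFiltration S d) :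
    (∑ j, tOp S j ∘ₗ dgOp S g j) v - (d : ℂ) • v ∈ degreeFiltration S (d + 1) := by
  have hsplit : (∑ j, tOp S j ∘ₗ dgOp S g j) v =
      eulerOp S v + ∑ j, tOp S j (pMul S (pderiv j g) v) := by
    simp only [eulerOp, dgOp, LinearMap.sum_apply, LinearMap.comp_apply, LinearMap.add_apply,
      map_add, Finset.sum_add_distrib]
  rw [hsplit, add_sub_right_comm]
  exact add_mem (eulerOp_sub_mem_degreeFiltration hv)
    (Submodule.sum_mem _ fun j _ => tOp_mem_degreeFiltration j (pMul_mem_degreeFiltration _ hv))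

theorem upOp_mem_degreeFiltration (g : MvPolynomial (Fin n) ℂ) (i : Fin n) {d : ℤ}
    {v : TgS n S} (hv : v ∈ degreeFiltration S (d + 1)) :
    ((∑ j, tOp S j ∘ₗ dgOp S g j ∘ₗ dgOp S g i) + (-(d : ℂ)) • dgOp S g i) v ∈
      degreeFiltration S (d + 1) := by
  have hw := dgOp_mem_degreeFiltration g i hv
  rw [LinearMap.add_apply, LinearMap.smul_apply, neg_smul, ← sub_eq_add_neg]
  simpa only [LinearMap.sum_apply, LinearMap.comp_apply]
    using sum_tOp_dgOp_sub_mem_degreeFiltration g hw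

end DegreeFiltration

theorem degree_filtration_submodule_general (n : ℕ) (S : Finset (Fin n))
    (g : MvPolynomial (Fin n) ℂ) (a : ℂ) (N : ℤ)
    (hN : ((n : ℂ) + 1) * (a - 1) = N)
    (π : sl (Fin (n + 1)) ℂ →ₗ⁅ℂ⁆ Module.End ℂ (TgS n S))
    (hπe : ∀ (i j : Fin n), i ≠ j → ∀ Y : sl (Fin (n + 1)) ℂ,
      (Y : Matrix (Fin (n + 1)) (Fin (n + 1)) ℂ) =
          Matrix.single i.castSucc j.castSucc 1 →
        π Y = -(tOp S j ∘ₗ dgOp S g i))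
    (hπlow : ∀ (j : Fin n) (Y : sl (Fin (n + 1)) ℂ),
      (Y : Matrix (Fin (n + 1)) (Fin (n + 1)) ℂ) =
          Matrix.single (Fin.last n) j.castSucc 1 →
        π Y = -tOp S j)
    (hπup : ∀ (i : Fin n) (Y : sl (Fin (n + 1)) ℂ),
      (Y : Matrix (Fin (n + 1)) (Fin (n + 1)) ℂ) =
          Matrix.single i.castSucc (Fin.last n) 1 →
        π Y = (∑ j : Fin n, tOp S j ∘ₗ dgOp S g j ∘ₗ dgOp S g i)
            + (((n : ℂ) + 1) * (1 - a)) • dgOp S g i) :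
    ∀ v ∈ Submodule.span ℂ
        {v : TgS n S | ∃ (m : Fin n → ℤ) (h : AllowedExp S m),
          N + 1 ≤ ∑ i, m i ∧ v = Finsupp.single ⟨m, h⟩ 1},
      ∀ Y : sl (Fin (n + 1)) ℂ,
        π Y v ∈ Submodule.span ℂ
          {v : TgS n S | ∃ (m : Fin n → ℤ) (h : AllowedExp S m),
            N + 1 ≤ ∑ i, m i ∧ v = Finsupp.single ⟨m, h⟩ 1} := by
  let K := (degreeFiltration S (N + 1)).stabilizerLieSubalgebra.comap π
  have hc : ((n : ℂ) + 1) * (1 - a) = -(N : ℂ) := by rw [← hN]; ring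
  have hK : ∀ p q (hpq : p ≠ q), single p q hpq 1 ∈ K := by
    intro p q hpq
    rw [LieSubalgebra.mem_comap, Submodule.mem_stabilizerLieSubalgebra]
    intro v hv
    induction p using Fin.lastCases with
    | last =>
      induction q using Fin.lastCases with
      | last => exact absurd rfl hpq
      | cast j =>
        rw [hπlow j (single _ _ hpq 1) rfl]
        exact neg_mem (degreeFiltration_antitone (by omega) (tOp_mem_degreeFiltration j hv))
    | cast i =>
      induction q using Fin.lastCases with
      | last =>
        rw [hπup i (single _ _ hpq 1) rfl, hc]
        exact upOp_mem_degreeFiltration g i hv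
      | cast j =>
        rw [hπe i j (fun hij => hpq (hij ▸ rfl)) (single _ _ hpq 1) rfl]
        exact neg_mem (tOp_mem_degreeFiltration j (dgOp_mem_degreeFiltration g i hv))
  intro v hv Y
  have hY : Y ∈ K := (lieSubalgebra_eq_top_of_single_mem hK).symm ▸ LieSubalgebra.mem_top Y
  exact ((LieSubalgebra.mem_comap _ _).1 hY) v hv

/-- if `(n+1)(a-1) = N ∈ ℤ`, then in the exponential tensor module
`T(g,V_a,S)` the span `T'` of the basis monomials `e^g t^m` with `Σ_j m_j ≥ N + 1` is an
`sl(n+1)`-submodule.  The `sl(n+1)`-action is via `ω_{V_a,∅}` twisted by `ψ_S` and `θ_g`. -/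
theorem degree_filtration_submodule (n : ℕ) (hn : 1 ≤ n) (S : Finset (Fin n))
    (g : MvPolynomial (Fin n) ℂ) (hg : constantCoeff g = 0) (a : ℂ) (N : ℤ)
    (hN : ((n : ℂ) + 1) * (a - 1) = N)
    (π : sl (Fin (n + 1)) ℂ →ₗ⁅ℂ⁆ Module.End ℂ (TgS n S))
    (hπh : ∀ (k : Fin n) (Y : sl (Fin (n + 1)) ℂ),
      (Y : Matrix (Fin (n + 1)) (Fin (n + 1)) ℂ) =
          Matrix.single k.castSucc k.castSucc 1 - ((n : ℂ) + 1)⁻¹ • 1 →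
        π Y = -(tOp S k ∘ₗ dgOp S g k) + (a - 1) • LinearMap.id)
    (hπe : ∀ (i j : Fin n), i ≠ j → ∀ Y : sl (Fin (n + 1)) ℂ,
      (Y : Matrix (Fin (n + 1)) (Fin (n + 1)) ℂ) =
          Matrix.single i.castSucc j.castSucc 1 →
        π Y = -(tOp S j ∘ₗ dgOp S g i))
    (hπlow : ∀ (j : Fin n) (Y : sl (Fin (n + 1)) ℂ),
      (Y : Matrix (Fin (n + 1)) (Fin (n + 1)) ℂ) =
          Matrix.single (Fin.last n) j.castSucc 1 →
        π Y = -tOp S j)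
    (hπup : ∀ (i : Fin n) (Y : sl (Fin (n + 1)) ℂ),
      (Y : Matrix (Fin (n + 1)) (Fin (n + 1)) ℂ) =
          Matrix.single i.castSucc (Fin.last n) 1 →
        π Y = (∑ j : Fin n, tOp S j ∘ₗ dgOp S g j ∘ₗ dgOp S g i)
            + (((n : ℂ) + 1) * (1 - a)) • dgOp S g i) :
    ∀ v ∈ Submodule.span ℂ
        {v : TgS n S | ∃ (m : Fin n → ℤ) (h : AllowedExp S m),
          N + 1 ≤ ∑ i, m i ∧ v = Finsupp.single ⟨m, h⟩ 1},
      ∀ Y : sl (Fin (n + 1)) ℂ,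
        π Y v ∈ Submodule.span ℂ
          {v : TgS n S | ∃ (m : Fin n → ℤ) (h : AllowedExp S m),
            N + 1 ≤ ∑ i, m i ∧ v = Finsupp.single ⟨m, h⟩ 1} :=
  degree_filtration_submodule_general n S g a N hN π hπe hπlow hπup
end
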